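/- arXiv:1405.2607 — 3 statements merged into one kernel-verified Lean document; each statement's English description precedes it below -/
import Mathlib

section
/- Assume (V0′), (F0), (F1) and (WN). Then for all u ∈ E, t ≥ 0 and w ∈ E^{ℱ−}: Φ(u) ≥ Φ(tu + w) + ½‖w‖₀² − ½∫_{ℝᴺ} V₁(x)w² dx + ((1−t²)/2)⟨Φ′(u), u⟩ − t⟨Φ′(u), w⟩. -/
/-!
After expanding the quadratic part of `Φ` at `t u + w`, and using `Q(w) = -‖w‖₀² + ∫ V₁ w²` for
`w ∈ E^{ℱ-}`, the inequality becomes the integral of the pointwise inequality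
`F(a) + f(a) ((t² - 1)/2 · a + t b) ≤ F(t a + b)` with `a = u(x)`, `b = w(x)`.
For `a > 0`, (WN) gives `f(r) ≥ (f(a)/a) r` for `r ≥ a` and `f(r) ≤ (f(a)/a) r` on `[0, a]`, hence
`F(s) - F(a) ≥ (f(a)/a) (s² - a²)/2` for all `s ≥ 0`, while
`f(a) ((t² - 1)/2 · a + t b) = (f(a)/a) ((t a + b)² - a²)/2 - (f(a)/a) b²/2`.
If `t a + b < 0` one uses `F ≥ 0` (from (F1) and (WN), `f(r) r ≥ 0`) and `(t a + b)² ≤ b²` instead.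
The case `a < 0` is the case `a > 0` for `r ↦ -f(-r)`.
-/

open MeasureTheory Filter Topology RealInnerProductSpace

/-- `Fint f x t = F(x,t) = ∫₀ᵗ f(x,s) ds`. -/
noncomputable def Fint {N : ℕ} (f : EuclideanSpace ℝ (Fin N) → ℝ → ℝ)
    (x : EuclideanSpace ℝ (Fin N)) (t : ℝ) : ℝ :=
  ∫ s in (0:ℝ)..t, f x s

def MonotoneDivAbs (g : ℝ → ℝ) : Prop :=
  ∀ s₁ s₂, s₁ ≤ s₂ → (s₂ < 0 ∨ 0 < s₁) → g s₁ / |s₁| ≤ g s₂ / |s₂|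

namespace MonotoneDivAbs

variable {g : ℝ → ℝ} {a r s t : ℝ}

theorem neg_comp_neg (hg : MonotoneDivAbs g) : MonotoneDivAbs fun r => -g (-r) := by
  intro s₁ s₂ h12 hs
  have h := hg (-s₂) (-s₁) (neg_le_neg h12)
    (by rcases hs with hs | hs <;> [right; left] <;> linarith)
  rw [abs_neg, abs_neg] at h
  rw [neg_div, neg_div]
  linarith

theorem div_mul_le (hg : MonotoneDivAbs g) (ha : 0 < a) (har : a ≤ r) : g a / a * r ≤ g r := by
  have hr := ha.trans_le har
  have h := hg a r har (Or.inr ha)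
  rw [abs_of_pos ha, abs_of_pos hr, div_le_div_iff₀ ha hr] at h
  rw [div_mul_eq_mul_div, div_le_iff₀ ha]
  linarith

theorem le_div_mul (hg : MonotoneDivAbs g) (hg0 : g 0 = 0) (hr : 0 ≤ r) (hra : r ≤ a) :
    g r ≤ g a / a * r := by
  rcases hr.eq_or_lt with rfl | hr
  · simp [hg0]
  have ha := hr.trans_le hra
  have h := hg r a hra (Or.inr hr)
  rw [abs_of_pos ha, abs_of_pos hr, div_le_div_iff₀ hr ha] at h
  rw [div_mul_eq_mul_div, le_div_iff₀ ha]
  linarith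

theorem nonneg (hg : MonotoneDivAbs g) (ho : g =o[𝓝 0] id) (hs : 0 ≤ s) : 0 ≤ g s := by
  rcases hs.eq_or_lt with rfl | hs
  · exact (ho.isBigO.eq_zero_imp.self_of_nhds rfl).ge
  -- `g r / r * s ≤ g s` for `0 < r ≤ s`, and the left side tends to `0` as `r → 0⁺`
  have hlim : Tendsto (fun r => g r / r * s) (𝓝[>] 0) (𝓝 0) := by
    simpa using (ho.tendsto_div_nhds_zero.mono_left nhdsWithin_le_nhds).mul_const s
  refine le_of_tendsto hlim ?_
  filter_upwards [Ioc_mem_nhdsGT hs] with r hr using hg.div_mul_le hr.1 hr.2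

theorem isLittleO_neg_comp_neg (ho : g =o[𝓝 0] id) : (fun r => -g (-r)) =o[𝓝 0] id := by
  have h : Tendsto (fun r : ℝ => -r) (𝓝 0) (𝓝 0) := by simpa using (continuous_neg.tendsto (0:ℝ))
  exact ((ho.comp_tendsto h).neg_left.neg_right).congr (fun _ => rfl) fun _ => neg_neg _

theorem integral_neg_comp_neg (s : ℝ) : ∫ r in (0:ℝ)..s, -g (-r) = ∫ r in (0:ℝ)..(-s), g r := by
  rw [intervalIntegral.integral_neg, intervalIntegral.integral_comp_neg, neg_zero,
    intervalIntegral.integral_symm, neg_neg]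

theorem integral_nonneg (hg : MonotoneDivAbs g) (ho : g =o[𝓝 0] id) (s : ℝ) :
    0 ≤ ∫ r in (0:ℝ)..s, g r := by
  rcases le_total 0 s with hs | hs
  · exact intervalIntegral.integral_nonneg hs fun r hr => hg.nonneg ho hr.1
  · rw [← neg_neg s, ← integral_neg_comp_neg]
    exact intervalIntegral.integral_nonneg (neg_nonneg.2 hs)
      fun r hr => hg.neg_comp_neg.nonneg (isLittleO_neg_comp_neg ho) hr.1

theorem mul_sq_sub_sq_le_integral (hgc : Continuous g) (hg : MonotoneDivAbs g) (hg0 : g 0 = 0)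
    (ha : 0 < a) (hs : 0 ≤ s) : g a / a * ((s ^ 2 - a ^ 2) / 2) ≤ ∫ r in a..s, g r := by
  have hlin : Continuous fun r => g a / a * r := by fun_prop
  rw [← integral_id, ← intervalIntegral.integral_const_mul]
  rcases le_total a s with has | hsa
  · exact intervalIntegral.integral_mono_on has (hlin.intervalIntegrable _ _)
      (hgc.intervalIntegrable _ _) fun r hr => hg.div_mul_le ha hr.1
  · rw [intervalIntegral.integral_symm s a, intervalIntegral.integral_symm s a, neg_le_neg_iff]
    exact intervalIntegral.integral_mono_on hsa (hgc.intervalIntegrable _ _)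
      (hlin.intervalIntegrable _ _) fun r hr => hg.le_div_mul hg0 (hs.trans hr.1) hr.2

theorem integral_add_le_of_pos (hgc : Continuous g) (hg : MonotoneDivAbs g) (ho : g =o[𝓝 0] id)
    (ha : 0 < a) (ht : 0 ≤ t) (b : ℝ) :
    (∫ r in (0:ℝ)..a, g r) + ((t ^ 2 - 1) / 2 * (g a * a) + t * (g a * b))
      ≤ ∫ r in (0:ℝ)..(t * a + b), g r := by
  have hg0 : g 0 = 0 := ho.isBigO.eq_zero_imp.self_of_nhds rfl
  have hc : 0 ≤ g a / a := div_nonneg (hg.nonneg ho ha.le) ha.le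
  have hsq : (t ^ 2 - 1) / 2 * (g a * a) + t * (g a * b)
      = g a / a * (((t * a + b) ^ 2 - a ^ 2) / 2) - g a / a * b ^ 2 / 2 := by
    field_simp
    ring
  have hadd := intervalIntegral.integral_add_adjacent_intervals (μ := volume) (a := 0) (b := a)
    (c := t * a + b) (hgc.intervalIntegrable _ _) (hgc.intervalIntegrable _ _)
  rcases le_total 0 (t * a + b) with hs | hs
  · have := hg.mul_sq_sub_sq_le_integral hgc hg0 ha hs
    nlinarith [mul_nonneg hc (sq_nonneg b)]
  · have h0 := hg.mul_sq_sub_sq_le_integral hgc hg0 ha le_rfl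
    have hta : 0 ≤ t * a := mul_nonneg ht ha.le
    have hb : (t * a + b) ^ 2 ≤ b ^ 2 := by
      nlinarith [mul_nonneg hta (by linarith : 0 ≤ -(b + (t * a + b)))]
    have := hg.integral_nonneg ho (t * a + b)
    rw [intervalIntegral.integral_symm] at h0
    nlinarith [mul_le_mul_of_nonneg_left hb hc]

theorem integral_add_le (hgc : Continuous g) (hg : MonotoneDivAbs g) (ho : g =o[𝓝 0] id)
    (ht : 0 ≤ t) (a b : ℝ) :
    (∫ r in (0:ℝ)..a, g r) + ((t ^ 2 - 1) / 2 * (g a * a) + t * (g a * b))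
      ≤ ∫ r in (0:ℝ)..(t * a + b), g r := by
  rcases lt_trichotomy a 0 with ha | rfl | ha
  · have := integral_add_le_of_pos (g := fun r => -g (-r)) (by fun_prop) hg.neg_comp_neg
      (isLittleO_neg_comp_neg ho) (neg_pos.2 ha) ht (-b)
    simp only [integral_neg_comp_neg, neg_neg, ← neg_add, mul_neg] at this
    linarith
  · simpa [ho.isBigO.eq_zero_imp.self_of_nhds rfl] using hg.integral_nonneg ho b
  · exact integral_add_le_of_pos hgc hg ho ha ht b

end MonotoneDivAbs

theorem isLittleO_id_of_forall_abs_le {α : Type*} {f : α → ℝ → ℝ}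
    (h : ∀ ε > 0, ∃ δ > 0, ∀ x t, |t| ≤ δ → |f x t| ≤ ε * |t|) (x : α) : f x =o[𝓝 0] id :=
  Asymptotics.isLittleO_iff.2 fun ε hε => by
    obtain ⟨δ, hδ, hδf⟩ := h ε hε
    filter_upwards [Metric.closedBall_mem_nhds 0 hδ] with s hs
    simpa using hδf x s (by simpa using hs)

section

variable {α : Type*} [MeasurableSpace α] {μ : Measure α}

theorem integral_primitive_add_le {f : α → ℝ → ℝ} (hfc : ∀ x, Continuous (f x))
    (hf : ∀ x, MonotoneDivAbs (f x)) (ho : ∀ x, f x =o[𝓝 0] id) {t : ℝ} (ht : 0 ≤ t)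
    {a b : α → ℝ} (hFa : Integrable (fun x => ∫ r in (0:ℝ)..a x, f x r) μ)
    (hFab : Integrable (fun x => ∫ r in (0:ℝ)..(t * a x + b x), f x r) μ)
    (haa : Integrable (fun x => f x (a x) * a x) μ)
    (hab : Integrable (fun x => f x (a x) * b x) μ) :
    (∫ x, (∫ r in (0:ℝ)..a x, f x r) ∂μ)
        + ((t ^ 2 - 1) / 2 * ∫ x, f x (a x) * a x ∂μ + t * ∫ x, f x (a x) * b x ∂μ)
      ≤ ∫ x, (∫ r in (0:ℝ)..(t * a x + b x), f x r) ∂μ := by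
  have hlin : Integrable (fun x => (t ^ 2 - 1) / 2 * (f x (a x) * a x) + t * (f x (a x) * b x)) μ :=
    (haa.const_mul _).add (hab.const_mul _)
  rw [← integral_const_mul, ← integral_const_mul,
    ← integral_add (haa.const_mul _) (hab.const_mul _), ← integral_add hFa hlin]
  exact integral_mono (hFa.add hlin) hFab fun x =>
    (hf x).integral_add_le (hfc x) (ho x) ht (a x) (b x)

theorem integral_energy_eq_neg_norm_sq_add {E G : Type*} [NormedAddCommGroup E]
    [NormedAddCommGroup G] {g : α → G} {v V₀ V₁ : α → ℝ} {w : E} {Pm Pp : E → E}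
    (hform : ∫ x, (‖g x‖ ^ 2 + V₀ x * (v x) ^ 2) ∂μ = ‖Pp w‖ ^ 2 - ‖Pm w‖ ^ 2)
    (hPsum : Pm w + Pp w = w) (hPm : Pm w = w)
    (hQ : Integrable (fun x => ‖g x‖ ^ 2 + (V₀ x + V₁ x) * (v x) ^ 2) μ)
    (hV₁ : Integrable (fun x => V₁ x * (v x) ^ 2) μ) :
    ∫ x, (‖g x‖ ^ 2 + (V₀ x + V₁ x) * (v x) ^ 2) ∂μ = -‖w‖ ^ 2 + ∫ x, V₁ x * (v x) ^ 2 ∂μ := by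
  have hPp : Pp w = 0 := by simpa [hPm] using hPsum
  have hV₀ : Integrable (fun x => ‖g x‖ ^ 2 + V₀ x * (v x) ^ 2) μ :=
    (hQ.sub hV₁).congr (ae_of_all _ fun x => by simp only [Pi.sub_apply]; ring)
  have hsplit : ∫ x, (‖g x‖ ^ 2 + (V₀ x + V₁ x) * (v x) ^ 2) ∂μ
      = (∫ x, (‖g x‖ ^ 2 + V₀ x * (v x) ^ 2) ∂μ) + ∫ x, V₁ x * (v x) ^ 2 ∂μ := by
    rw [← integral_add hV₀ hV₁]
    simp only [add_mul, add_assoc]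
  rw [hsplit, hform, hPp, hPm, norm_zero]
  ring

variable {E G : Type*} [AddCommGroup E] [Module ℝ E] [NormedAddCommGroup G] [InnerProductSpace ℝ G]

theorem integral_energy_smul_add (ι : E →ₗ[ℝ] α → ℝ) (grad : E →ₗ[ℝ] α → G) (V : α → ℝ)
    (hint : ∀ u, Integrable (fun x => ‖grad u x‖ ^ 2 + V x * (ι u x) ^ 2) μ) (t : ℝ) (u w : E) :
    ∫ x, (‖grad (t • u + w) x‖ ^ 2 + V x * (ι (t • u + w) x) ^ 2) ∂μ
      = t ^ 2 * ∫ x, (‖grad u x‖ ^ 2 + V x * (ι u x) ^ 2) ∂μ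
        + 2 * t * ∫ x, (⟪grad u x, grad w x⟫ + V x * (ι u x * ι w x)) ∂μ
        + ∫ x, (‖grad w x‖ ^ 2 + V x * (ι w x) ^ 2) ∂μ := by
  have hpolar : (fun x => ⟪grad u x, grad w x⟫ + V x * (ι u x * ι w x))
      = fun x => ((‖grad (u + w) x‖ ^ 2 + V x * (ι (u + w) x) ^ 2)
          - (‖grad u x‖ ^ 2 + V x * (ι u x) ^ 2) - (‖grad w x‖ ^ 2 + V x * (ι w x) ^ 2)) / 2 := by
    ext x
    simp only [map_add, Pi.add_apply, norm_add_sq_real]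
    ring
  have hcross : Integrable (fun x => ⟪grad u x, grad w x⟫ + V x * (ι u x * ι w x)) μ := by
    rw [hpolar]
    exact (((hint _).sub (hint u)).sub (hint w)).div_const 2
  have hexpand : (fun x => ‖grad (t • u + w) x‖ ^ 2 + V x * (ι (t • u + w) x) ^ 2)
      = fun x => t ^ 2 * (‖grad u x‖ ^ 2 + V x * (ι u x) ^ 2)
          + 2 * t * (⟪grad u x, grad w x⟫ + V x * (ι u x * ι w x))
          + (‖grad w x‖ ^ 2 + V x * (ι w x) ^ 2) := by
    ext x
    simp only [map_add, map_smul, Pi.add_apply, Pi.smul_apply, smul_eq_mul, norm_add_sq_real,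
      norm_smul, real_inner_smul_left, Real.norm_eq_abs, mul_pow, sq_abs]
    ring
  rw [hexpand, integral_add _ (hint w), integral_add ((hint u).const_mul _) (hcross.const_mul _),
    integral_const_mul, integral_const_mul]
  exact ((hint u).const_mul _).add (hcross.const_mul _)

end

theorem key_energy_inequality_general
    {E : Type*} [NormedAddCommGroup E] [InnerProductSpace ℝ E]
    {N : ℕ}
    -- `E = H¹(ℝᴺ)`, realized as a Hilbert space of functions on `ℝᴺ` via `ι`,
    -- with (weak) gradient `grad`
    (ι : E →ₗ[ℝ] (EuclideanSpace ℝ (Fin N) → ℝ))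
    (grad : E →ₗ[ℝ] (EuclideanSpace ℝ (Fin N) → EuclideanSpace ℝ (Fin N)))
    (hmemg : ∀ u : E, MemLp (fun x => ‖grad u x‖) 2 (volume : Measure (EuclideanSpace ℝ (Fin N))))
    -- the spectral decomposition of `E` into the negative and positive spectral
    -- subspaces of the Schrödinger operator, with the associated projections
    (Em : Submodule ℝ E)
    (Pm Pp : E →L[ℝ] E)
    (hPsum : ∀ u, Pm u + Pp u = u)
    (hPmId : ∀ u ∈ Em, Pm u = u)
    -- (V0'): `V = V₀ + V₁`, `V₀` continuous and bounded, `V₁` continuous vanishing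
    -- at infinity; the norm `‖·‖₀` of `E` is the form norm of `A₀ = -Δ + V₀`, whose
    -- quadratic form is positive on `Ep = E^{ℱ+}` and negative on `Em = E^{ℱ-}`
    (V₀ V₁ : EuclideanSpace ℝ (Fin N) → ℝ)
    (hform : ∀ u : E,
      (∫ x, (‖grad u x‖ ^ 2 + V₀ x * (ι u x) ^ 2)) = ‖Pp u‖ ^ 2 - ‖Pm u‖ ^ 2)
    -- (F0) and (F1)
    (f : EuclideanSpace ℝ (Fin N) → ℝ → ℝ)
    (hfc : Continuous (Function.uncurry f))
    (hF1 : ∀ ε > 0, ∃ δ > 0, ∀ x t, |t| ≤ δ → |f x t| ≤ ε * |t|)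
    -- (WN): `t ↦ f(x,t)/|t|` is nondecreasing on `(-∞,0)` and on `(0,∞)`
    (hWN : ∀ (x : EuclideanSpace ℝ (Fin N)) (s₁ s₂ : ℝ),
      s₁ ≤ s₂ → (s₂ < 0 ∨ 0 < s₁) → f x s₁ / |s₁| ≤ f x s₂ / |s₂|)
    -- the energy functional `Φ` and its derivative `Φ'`
    (Φ : E → ℝ) (Φ' : E → E →L[ℝ] ℝ)
    (hΦ : ∀ u, Φ u = (1/2) * (∫ x, (‖grad u x‖ ^ 2 + (V₀ x + V₁ x) * (ι u x) ^ 2))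
        - ∫ x, Fint f x (ι u x))
    (hΦ'eq : ∀ u v, Φ' u v =
      (∫ x, (⟪grad u x, grad v x⟫ + (V₀ x + V₁ x) * (ι u x * ι v x)))
        - ∫ x, f x (ι u x) * ι v x)
    (hintF : ∀ u : E, Integrable (fun x => Fint f x (ι u x)))
    (hintV : ∀ u : E, Integrable (fun x => (V₀ x + V₁ x) * (ι u x) ^ 2))
    (hintf : ∀ u v : E, Integrable (fun x => f x (ι u x) * ι v x))
    (hintV₁ : ∀ u : E, Integrable (fun x => V₁ x * (ι u x) ^ 2))
 :
    ∀ (u : E) (t : ℝ) (w : E), 0 ≤ t → w ∈ Em →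
      Φ (t • u + w) + (1/2) * ‖w‖ ^ 2 - (1/2) * (∫ x, V₁ x * (ι w x) ^ 2)
        + (1 - t ^ 2) / 2 * Φ' u u - t * Φ' u w ≤ Φ u := by
  intro u t w ht hw
  have hQ (z : E) : Integrable (fun x => ‖grad z x‖ ^ 2 + (V₀ x + V₁ x) * (ι z x) ^ 2) :=
    (hmemg z).integrable_sq.add (hintV z)
  have hdiag : ∫ x, (⟪grad u x, grad u x⟫ + (V₀ x + V₁ x) * (ι u x * ι u x))
      = ∫ x, (‖grad u x‖ ^ 2 + (V₀ x + V₁ x) * (ι u x) ^ 2) := by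
    simp only [real_inner_self_eq_norm_sq, ← sq]
  have hexp := integral_energy_smul_add ι grad (fun x => V₀ x + V₁ x) hQ t u w
  beta_reduce at hexp
  have hneg := integral_energy_eq_neg_norm_sq_add (hform w) (hPsum w) (hPmId w hw) (hQ w) (hintV₁ w)
  have hF := integral_primitive_add_le (f := f) (fun x => hfc.comp (Continuous.prodMk_right x)) hWN
    (isLittleO_id_of_forall_abs_le hF1) ht (hintF u) (by simpa [Fint] using hintF (t • u + w))
    (hintf u u) (hintf u w)
  rw [hΦ, hΦ, hΦ'eq, hΦ'eq, hdiag, hexp, hneg]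
  simp only [Fint, map_add, map_smul, Pi.add_apply, Pi.smul_apply, smul_eq_mul] at hF ⊢
  linarith

theorem key_energy_inequality
    {E : Type*} [NormedAddCommGroup E] [InnerProductSpace ℝ E] [CompleteSpace E]
    {N : ℕ} (hN : 3 ≤ N)
    -- `E = H¹(ℝᴺ)`, realized as a Hilbert space of functions on `ℝᴺ` via `ι`,
    -- with (weak) gradient `grad`
    (ι : E →ₗ[ℝ] (EuclideanSpace ℝ (Fin N) → ℝ)) (hι : Function.Injective ι)
    (grad : E →ₗ[ℝ] (EuclideanSpace ℝ (Fin N) → EuclideanSpace ℝ (Fin N)))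
    (hmem2 : ∀ u : E, MemLp (ι u) 2 (volume : Measure (EuclideanSpace ℝ (Fin N))))
    (hmemg : ∀ u : E, MemLp (fun x => ‖grad u x‖) 2 (volume : Measure (EuclideanSpace ℝ (Fin N))))
    -- the spectral decomposition of `E` into the negative and positive spectral
    -- subspaces of the Schrödinger operator, with the associated projections
    (Em Ep : Submodule ℝ E) (hEmc : IsClosed (Em : Set E)) (hEpc : IsClosed (Ep : Set E))
    (Pm Pp : E →L[ℝ] E)
    (hPm : ∀ u, Pm u ∈ Em) (hPp : ∀ u, Pp u ∈ Ep) (hPsum : ∀ u, Pm u + Pp u = u)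
    (hPmId : ∀ u ∈ Em, Pm u = u) (hPpId : ∀ u ∈ Ep, Pp u = u)
    (horth : ∀ v ∈ Em, ∀ w ∈ Ep, ⟪v, w⟫ = 0)
    -- (V0'): `V = V₀ + V₁`, `V₀` continuous and bounded, `V₁` continuous vanishing
    -- at infinity; the norm `‖·‖₀` of `E` is the form norm of `A₀ = -Δ + V₀`, whose
    -- quadratic form is positive on `Ep = E^{ℱ+}` and negative on `Em = E^{ℱ-}`
    (V₀ V₁ : EuclideanSpace ℝ (Fin N) → ℝ)
    (hV₀c : Continuous V₀) (hV₀b : ∃ M, ∀ x, |V₀ x| ≤ M) (hV₁c : Continuous V₁)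
    (hV₁0 : Tendsto V₁ (cocompact (EuclideanSpace ℝ (Fin N))) (𝓝 0))
    (hform : ∀ u : E,
      (∫ x, (‖grad u x‖ ^ 2 + V₀ x * (ι u x) ^ 2)) = ‖Pp u‖ ^ 2 - ‖Pm u‖ ^ 2)
    -- (F0) and (F1)
    (f : EuclideanSpace ℝ (Fin N) → ℝ → ℝ)
    (hfc : Continuous (Function.uncurry f))
    (p : ℝ) (hp1 : 2 < p) (hp2 : p < 2 * (N:ℝ) / ((N:ℝ) - 2))
    (hF0 : ∃ C₀ > 0, ∀ x t, |f x t| ≤ C₀ * (1 + |t| ^ (p - 1)))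
    (hF1 : ∀ ε > 0, ∃ δ > 0, ∀ x t, |t| ≤ δ → |f x t| ≤ ε * |t|)
    -- (WN): `t ↦ f(x,t)/|t|` is nondecreasing on `(-∞,0)` and on `(0,∞)`
    (hWN : ∀ (x : EuclideanSpace ℝ (Fin N)) (s₁ s₂ : ℝ),
      s₁ ≤ s₂ → (s₂ < 0 ∨ 0 < s₁) → f x s₁ / |s₁| ≤ f x s₂ / |s₂|)
    -- the energy functional `Φ` and its derivative `Φ'`
    (Φ : E → ℝ) (Φ' : E → E →L[ℝ] ℝ)
    (hΦ : ∀ u, Φ u = (1/2) * (∫ x, (‖grad u x‖ ^ 2 + (V₀ x + V₁ x) * (ι u x) ^ 2))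
        - ∫ x, Fint f x (ι u x))
    (hΦ'd : ∀ u, HasFDerivAt Φ (Φ' u) u)
    (hΦ'eq : ∀ u v, Φ' u v =
      (∫ x, (⟪grad u x, grad v x⟫ + (V₀ x + V₁ x) * (ι u x * ι v x)))
        - ∫ x, f x (ι u x) * ι v x)
    (hintF : ∀ u : E, Integrable (fun x => Fint f x (ι u x)))
    (hintV : ∀ u : E, Integrable (fun x => (V₀ x + V₁ x) * (ι u x) ^ 2))
    (hintf : ∀ u v : E, Integrable (fun x => f x (ι u x) * ι v x))
    (hintV₁ : ∀ u : E, Integrable (fun x => V₁ x * (ι u x) ^ 2))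
 :
    ∀ (u : E) (t : ℝ) (w : E), 0 ≤ t → w ∈ Em →
      Φ (t • u + w) + (1/2) * ‖w‖ ^ 2 - (1/2) * (∫ x, V₁ x * (ι w x) ^ 2)
        + (1 - t ^ 2) / 2 * Φ' u u - t * Φ' u w ≤ Φ u :=
  key_energy_inequality_general ι grad hmemg Em Pm Pp hPsum hPmId V₀ V₁ hform f hfc hF1 hWN Φ Φ' hΦ
    hΦ'eq hintF hintV hintf hintV₁
end

section
/- Let g : ℝ → ℝ be continuous with g(0) = 0, s·g(s) ≥ 0 for all s ∈ ℝ, and s ↦ g(s)/|s| nondecreasing on (−∞,0) and on (0,∞). Then for every τ ≠ 0, every t ≥ 0 and every σ ∈ ℝ: ((1−t²)/2 · τ − tσ) g(τ) ≥ ∫_{tτ+σ}^{τ} g(s) ds. -/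
open MeasureTheory Filter Topology RealInnerProductSpace

lemma key_pos_aux (g : ℝ → ℝ) (hg : Continuous g) (hg0 : g 0 = 0)
    (hsign : ∀ s : ℝ, 0 ≤ s * g s)
    (hmono : ∀ s₁ s₂ : ℝ, s₁ ≤ s₂ → (s₂ < 0 ∨ 0 < s₁) → g s₁ / |s₁| ≤ g s₂ / |s₂|)
    (τ : ℝ) (hτ : 0 < τ) (t : ℝ) (ht : 0 ≤ t) (σ : ℝ) :
    (∫ s in (t * τ + σ)..τ, g s) ≤ ((1 - t ^ 2) / 2 * τ - t * σ) * g τ := by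
  obtain ⟨a, ha⟩ : ∃ x : ℝ, x = t * τ + σ := ⟨_, rfl⟩
  rw [← ha]
  have hgτ : 0 ≤ g τ := by nlinarith [hsign τ]
  obtain ⟨c, hc⟩ : ∃ x : ℝ, x = g τ / τ := ⟨_, rfl⟩
  have hc0 : 0 ≤ c := hc ▸ div_nonneg hgτ hτ.le
  have hcτ : g τ = c * τ := by rw [hc]; field_simp
  have hrhs : ((1 - t ^ 2) / 2 * τ - t * σ) * g τ = c * (τ^2 - a^2 + σ^2) / 2 := by
    rw [hcτ, ha]; ring
  rw [hrhs]
  have hub : ∀ x ∈ Set.Icc (0:ℝ) τ, g x ≤ c * x := by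
    intro x hx
    rcases eq_or_lt_of_le hx.1 with h | h
    · simp [← h, hg0]
    · have hm := hmono x τ hx.2 (Or.inr h)
      rw [abs_of_pos h, abs_of_pos hτ, ← hc] at hm
      exact (div_le_iff₀ h).mp hm
  rcases le_or_gt a τ with hle | hlt
  · rcases le_or_gt 0 a with h0a | h0a
    · -- 0 ≤ a ≤ τ
      have hmain : (∫ s in a..τ, g s) ≤ ∫ s in a..τ, c * s := by
        apply intervalIntegral.integral_mono_on hle (hg.intervalIntegrable _ _)
          ((continuous_const.mul continuous_id).intervalIntegrable _ _)
        intro x hx; exact hub x ⟨le_trans h0a hx.1, hx.2⟩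
      have hint : (∫ s in a..τ, c * s) = c * (τ^2 - a^2) / 2 := by
        rw [intervalIntegral.integral_const_mul, integral_id]
        ring
      nlinarith [sq_nonneg σ]
    · -- a < 0 < τ
      have hσa : σ ≤ a := by nlinarith
      have hsq : a^2 ≤ σ^2 := by nlinarith
      have hsplit : (∫ s in a..τ, g s) = (∫ s in a..(0:ℝ), g s) + ∫ s in (0:ℝ)..τ, g s :=
        (intervalIntegral.integral_add_adjacent_intervals (hg.intervalIntegrable _ _)
          (hg.intervalIntegrable _ _)).symm
      have h1 : (∫ s in a..(0:ℝ), g s) ≤ 0 := by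
        have hm : (∫ s in a..(0:ℝ), g s) ≤ ∫ s in a..(0:ℝ), (0:ℝ) := by
          apply intervalIntegral.integral_mono_on h0a.le (hg.intervalIntegrable _ _)
            intervalIntegrable_const
          intro x hx
          rcases eq_or_lt_of_le hx.2 with h | h
          · simp [h, hg0]
          · nlinarith [hsign x]
        simpa using hm
      have h2 : (∫ s in (0:ℝ)..τ, g s) ≤ c * τ^2 / 2 := by
        have hm : (∫ s in (0:ℝ)..τ, g s) ≤ ∫ s in (0:ℝ)..τ, c * s := by
          apply intervalIntegral.integral_mono_on hτ.le (hg.intervalIntegrable _ _)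
            ((continuous_const.mul continuous_id).intervalIntegrable _ _)
          exact hub
        rw [intervalIntegral.integral_const_mul, integral_id] at hm
        nlinarith
      have hca : 0 ≤ c * (σ^2 - a^2) := mul_nonneg hc0 (by nlinarith)
      have hexp : c * (τ^2 - a^2 + σ^2) / 2 = c * τ^2 / 2 + c * (σ^2 - a^2) / 2 := by ring
      linarith
  · -- τ < a
    have hlb : ∀ x ∈ Set.Icc τ a, c * x ≤ g x := by
      intro x hx
      have hxpos : 0 < x := lt_of_lt_of_le hτ hx.1
      have hm := hmono τ x hx.1 (Or.inr hτ)
      rw [abs_of_pos hxpos, abs_of_pos hτ, ← hc] at hm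
      exact (le_div_iff₀ hxpos).mp hm
    have hm : (∫ s in τ..a, c * s) ≤ ∫ s in τ..a, g s := by
      apply intervalIntegral.integral_mono_on hlt.le
        ((continuous_const.mul continuous_id).intervalIntegrable _ _)
        (hg.intervalIntegrable _ _) hlb
    rw [intervalIntegral.integral_const_mul, integral_id] at hm
    rw [intervalIntegral.integral_symm]
    nlinarith [sq_nonneg σ]

theorem key_pointwise_inequality (g : ℝ → ℝ) (hg : Continuous g) (hg0 : g 0 = 0)
    (hsign : ∀ s : ℝ, 0 ≤ s * g s)
    (hmono : ∀ s₁ s₂ : ℝ, s₁ ≤ s₂ → (s₂ < 0 ∨ 0 < s₁) → g s₁ / |s₁| ≤ g s₂ / |s₂|) :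
    ∀ τ : ℝ, τ ≠ 0 → ∀ t : ℝ, 0 ≤ t → ∀ σ : ℝ,
      (∫ s in (t * τ + σ)..τ, g s) ≤ ((1 - t ^ 2) / 2 * τ - t * σ) * g τ := by
  intro τ hτ t ht σ
  rcases lt_or_gt_of_ne hτ with hneg | hpos
  · -- τ < 0 : apply key_pos_aux to g'(s) = -g(-s)
    set g' : ℝ → ℝ := fun s => -g (-s) with hg'
    have hg'c : Continuous g' := (hg.comp continuous_neg).neg
    have hg'0 : g' 0 = 0 := by simp [hg', hg0]
    have hsign' : ∀ s : ℝ, 0 ≤ s * g' s := by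
      intro s; have := hsign (-s); simp [hg']; nlinarith
    have hmono' : ∀ s₁ s₂ : ℝ, s₁ ≤ s₂ → (s₂ < 0 ∨ 0 < s₁) →
        g' s₁ / |s₁| ≤ g' s₂ / |s₂| := by
      intro s₁ s₂ hle hor
      have hor' : (-s₁ : ℝ) < 0 ∨ 0 < -s₂ := by
        rcases hor with h | h
        · exact Or.inr (by linarith)
        · exact Or.inl (by linarith)
      have hm := hmono (-s₂) (-s₁) (by linarith) hor'
      rw [abs_neg, abs_neg] at hm
      show -g (-s₁) / |s₁| ≤ -g (-s₂) / |s₂|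
      rw [neg_div, neg_div, neg_le_neg_iff]
      exact hm
    have key := key_pos_aux g' hg'c hg'0 hsign' hmono' (-τ) (by linarith) t ht (-σ)
    have hL : (∫ s in (t * (-τ) + -σ)..(-τ), g' s) = -(∫ s in τ..(t * τ + σ), g s) := by
      have e : t * (-τ) + -σ = -(t * τ + σ) := by ring
      rw [e]
      show (∫ s in (-(t * τ + σ))..(-τ), (fun x => -g x) (-s)) = _
      rw [intervalIntegral.integral_comp_neg (f := fun x => -g x)]
      simp [intervalIntegral.integral_neg]
    rw [hL] at key
    have hR : ((1 - t ^ 2) / 2 * (-τ) - t * (-σ)) * g' (-τ)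
        = ((1 - t ^ 2) / 2 * τ - t * σ) * g τ := by
      simp [hg']; ring
    rw [hR] at key
    rw [intervalIntegral.integral_symm]
    linarith
  · exact key_pos_aux g hg hg0 hsign hmono τ hpos t ht σ
end

section
/- Assume (V0′), (F0), (F1) and (WN). Then for all u ∈ E and t ≥ 0: Φ(u) ≥ (t²/2)‖u‖₀² − ∫_{ℝᴺ} F(x, t u^{ℱ+}) dx + ((1−t²)/2)⟨Φ′(u), u⟩ + t²⟨Φ′(u), u^{ℱ−}⟩ + (t²/2)∫_{ℝᴺ} V₁(x)[(u^{ℱ+})² − (u^{ℱ−})²] dx. -/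
/-! With `u = u⁻ + u⁺`, the spectral splitting of the quadratic form of `-Δ + V₀` makes every
quadratic term cancel, up to the `V₁`-terms that the statement carries along; what remains is the
pointwise inequality `F(τ) - ((t² + 1)/2 · τ - t w) f(τ) ≤ F(w)` for `τ = u(x)`, `w = t u⁺(x)`.
By (F1) and (WN) the slope `k = f(τ)/τ` is nonnegative and `s ↦ F(s) - k s²/2` is minimal at `τ` on
the closed half-line containing `τ`. If `τ w ≥ 0` this leaves the remainder `k (w - t τ)²/2 ≥ 0`;
otherwise `0 ≤ F(w)` and `F(τ) ≤ τ f(τ)/2` suffice. -/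

open MeasureTheory Filter Topology RealInnerProductSpace

open Set

theorem intervalIntegral_nonneg_of_mul_sub_nonneg {φ : ℝ → ℝ} {a b : ℝ}
    (h : ∀ r ∈ uIcc a b, 0 ≤ φ r * (r - a)) : 0 ≤ ∫ r in a..b, φ r := by
  have hIoo : ∀ {c d}, Ioo c d ⊆ uIcc a b → ∀ r ∈ Ioo c d, 0 ≤ φ r * (r - a) :=
    fun hcd r hr => h r (hcd hr)
  rcases le_total a b with hab | hba
  · rw [intervalIntegral.integral_of_le hab, integral_Ioc_eq_integral_Ioo]
    exact setIntegral_nonneg measurableSet_Ioo fun r hr =>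
      nonneg_of_mul_nonneg_left (hIoo (Ioo_subset_Icc_self.trans Icc_subset_uIcc) r hr)
        (sub_pos.2 hr.1)
  · rw [intervalIntegral.integral_symm, intervalIntegral.integral_of_le hba,
      integral_Ioc_eq_integral_Ioo, neg_nonneg]
    exact setIntegral_nonpos measurableSet_Ioo fun r hr =>
      nonpos_of_mul_nonneg_left (hIoo (Ioo_subset_Icc_self.trans Icc_subset_uIcc') r hr)
        (sub_neg.2 hr.2)

/-- Conditions (F1) and (WN) on a single fibre `g = f(x, ·)`. -/
structure WeakNehari (g : ℝ → ℝ) : Prop where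
  continuous : Continuous g
  isLittleO : g =o[𝓝 0] id
  monotoneOn_Ioi : MonotoneOn (fun s => g s / |s|) (Ioi 0)
  monotoneOn_Iio : MonotoneOn (fun s => g s / |s|) (Iio 0)

namespace WeakNehari

variable {g : ℝ → ℝ}

theorem of_forall_abs_le (hc : Continuous g)
    (hsmall : ∀ ε > 0, ∃ δ > 0, ∀ t, |t| ≤ δ → |g t| ≤ ε * |t|)
    (hmono : ∀ s₁ s₂, s₁ ≤ s₂ → (s₂ < 0 ∨ 0 < s₁) → g s₁ / |s₁| ≤ g s₂ / |s₂|) :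
    WeakNehari g where
  continuous := hc
  isLittleO := Asymptotics.isLittleO_iff.2 fun ε hε => by
    obtain ⟨δ, hδ, h⟩ := hsmall ε hε
    filter_upwards [Metric.closedBall_mem_nhds 0 hδ] with s hs
    simpa using h s (by simpa using hs)
  monotoneOn_Ioi := fun _ hs₁ _ _ h => hmono _ _ h (Or.inr hs₁)
  monotoneOn_Iio := fun _ _ _ hs₂ h => hmono _ _ h (Or.inl hs₂)

theorem map_zero (hg : WeakNehari g) : g 0 = 0 :=
  hg.isLittleO.isBigO.eq_zero_imp.self_of_nhds rfl

theorem tendsto_div_abs (hg : WeakNehari g) :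
    Tendsto (fun s => g s / |s|) (𝓝 0) (𝓝 0) := by
  simpa using hg.isLittleO.norm_right.tendsto_div_nhds_zero

theorem apply_mul_self_nonneg (hg : WeakNehari g) (s : ℝ) : 0 ≤ g s * s := by
  rcases lt_trichotomy s 0 with hs | rfl | hs
  · have h : g s / |s| ≤ 0 :=
      ge_of_tendsto (hg.tendsto_div_abs.mono_left nhdsWithin_le_nhds) <| by
        filter_upwards [Ioo_mem_nhdsLT hs] with r hr using
          hg.monotoneOn_Iio hs hr.2 hr.1.le
    rw [abs_of_neg hs, div_le_iff₀ (neg_pos.2 hs), zero_mul] at h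
    exact mul_nonneg_of_nonpos_of_nonpos h hs.le
  · simp
  · have h : 0 ≤ g s / |s| :=
      le_of_tendsto (hg.tendsto_div_abs.mono_left nhdsWithin_le_nhds) <| by
        filter_upwards [Ioo_mem_nhdsGT hs] with r hr using
          hg.monotoneOn_Ioi hr.1 hs hr.2.le
    rw [abs_of_pos hs, le_div_iff₀ hs, zero_mul] at h
    exact mul_nonneg h hs.le

theorem sub_slope_mul_nonneg (hg : WeakNehari g) {τ r : ℝ} (h : 0 ≤ τ * r) :
    0 ≤ (g r - g τ / τ * r) * (r - τ) := by
  rcases eq_or_ne τ 0 with rfl | hτ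
  · simpa using hg.apply_mul_self_nonneg r
  rcases eq_or_ne r 0 with rfl | hr
  · simp [hg.map_zero]
  rcases pos_and_pos_or_neg_and_neg_of_mul_pos (h.lt_of_ne (mul_ne_zero hτ hr).symm) with
    ⟨hτ, hr⟩ | ⟨hτ, hr⟩
  · have hmono := (monovaryOn_id_iff.2 hg.monotoneOn_Ioi).sub_mul_sub_nonneg hτ hr
    simp only [id, abs_of_pos hτ, abs_of_pos hr] at hmono
    have : g r - g τ / τ * r = r * (g r / r - g τ / τ) := by field_simp
    rw [this, mul_assoc]
    exact mul_nonneg hr.le hmono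
  · have hmono := (monovaryOn_id_iff.2 hg.monotoneOn_Iio).sub_mul_sub_nonneg hτ hr
    simp only [id, abs_of_neg hτ, abs_of_neg hr] at hmono
    have : g r - g τ / τ * r = -r * (g r / -r - g τ / -τ) := by field_simp; ring
    rw [this, mul_assoc]
    exact mul_nonneg (neg_nonneg.2 hr.le) hmono

theorem slope_mul_le_integral_sub (hg : WeakNehari g) {τ s : ℝ} (h : 0 ≤ τ * s) :
    g τ / τ * ((s ^ 2 - τ ^ 2) / 2) ≤ (∫ r in (0:ℝ)..s, g r) - ∫ r in (0:ℝ)..τ, g r := by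
  have hint : ∀ a b, IntervalIntegrable g volume a b := hg.continuous.intervalIntegrable
  rw [intervalIntegral.integral_interval_sub_left (hint _ _) (hint _ _), ← integral_id,
    ← intervalIntegral.integral_const_mul, ← sub_nonneg,
    ← intervalIntegral.integral_sub (hint _ _)
      ((continuous_const_mul _).intervalIntegrable _ _)]
  refine intervalIntegral_nonneg_of_mul_sub_nonneg fun r hr => hg.sub_slope_mul_nonneg ?_
  rcases mem_uIcc.1 hr with ⟨h₁, h₂⟩ | ⟨h₁, h₂⟩ <;> rcases le_total 0 τ with hτ | hτ <;> nlinarith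

theorem primitive_sub_le (hg : WeakNehari g) {t : ℝ} (ht : 0 ≤ t) (τ w : ℝ) :
    (∫ r in (0:ℝ)..τ, g r) - ((t ^ 2 + 1) / 2 * τ - t * w) * g τ ≤ ∫ r in (0:ℝ)..w, g r := by
  set k := g τ / τ
  have hk : 0 ≤ k := div_nonneg_iff.2 (mul_nonneg_iff.1 (hg.apply_mul_self_nonneg τ))
  have hgτ : g τ = k * τ := by
    rcases eq_or_ne τ 0 with rfl | hτ
    · simp [hg.map_zero]
    · exact (div_mul_cancel₀ _ hτ).symm
  rw [hgτ]
  rcases le_or_gt 0 (τ * w) with h | h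
  · nlinarith [hg.slope_mul_le_integral_sub h, mul_nonneg hk (sq_nonneg (w - t * τ))]
  · have hτ := hg.slope_mul_le_integral_sub (τ := τ) (s := 0) (by simp)
    have hw := hg.slope_mul_le_integral_sub (τ := 0) (s := w) (by simp)
    simp only [intervalIntegral.integral_same, div_zero, zero_mul, sub_zero] at hτ hw
    nlinarith [mul_nonneg hk (sq_nonneg (t * τ)), mul_nonneg (mul_nonneg hk ht) (neg_nonneg.2 h.le)]

end WeakNehari

theorem integral_primitive_sub_le {X : Type*} [MeasurableSpace X] {μ : Measure X}
    {f : X → ℝ → ℝ} (hf : ∀ x, WeakNehari (f x)) {a b c : X → ℝ} (habc : ∀ x, a x = c x + b x)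
    {t : ℝ} (ht : 0 ≤ t)
    (hFa : Integrable (fun x => ∫ s in (0:ℝ)..a x, f x s) μ)
    (hFb : Integrable (fun x => ∫ s in (0:ℝ)..t * b x, f x s) μ)
    (hfaa : Integrable (fun x => f x (a x) * a x) μ)
    (hfac : Integrable (fun x => f x (a x) * c x) μ) :
    (∫ x, (∫ s in (0:ℝ)..a x, f x s) ∂μ) - (1 - t ^ 2) / 2 * (∫ x, f x (a x) * a x ∂μ)
      - t ^ 2 * (∫ x, f x (a x) * c x ∂μ) ≤ ∫ x, (∫ s in (0:ℝ)..t * b x, f x s) ∂μ := by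
  have hFfa : Integrable
      (fun x => (∫ s in (0:ℝ)..a x, f x s) - (1 - t ^ 2) / 2 * (f x (a x) * a x)) μ :=
    hFa.sub (hfaa.const_mul _)
  rw [← integral_const_mul, ← integral_const_mul, ← integral_sub hFa (hfaa.const_mul _),
    ← integral_sub hFfa (hfac.const_mul _)]
  refine integral_mono (hFfa.sub (hfac.const_mul _)) hFb fun x =>
    le_of_eq_of_le ?_ ((hf x).primitive_sub_le ht (a x) (t * b x))
  rw [habc x]
  ring

section QuadraticForm

variable {X E G H : Type*} [AddCommGroup E] [Module ℝ E]
  [NormedAddCommGroup G] [InnerProductSpace ℝ G] [NormedAddCommGroup H] [InnerProductSpace ℝ H]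
  {ι : E →ₗ[ℝ] X → ℝ} {grad : E →ₗ[ℝ] X → G} {V : X → ℝ}

theorem inner_add_mul_eq_polarization (u v : E) (x : X) :
    ⟪grad u x, grad v x⟫ + V x * (ι u x * ι v x)
      = ((‖grad (u + v) x‖ ^ 2 + V x * ι (u + v) x ^ 2)
        - (‖grad (u - v) x‖ ^ 2 + V x * ι (u - v) x ^ 2)) / 4 := by
  simp only [map_add, map_sub, Pi.add_apply, Pi.sub_apply, norm_add_sq_real, norm_sub_sq_real]
  ring

variable [MeasurableSpace X] {μ : Measure X}

theorem integrable_inner_add_mul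
    (hQ : ∀ w, Integrable (fun x => ‖grad w x‖ ^ 2 + V x * ι w x ^ 2) μ) (u v : E) :
    Integrable (fun x => ⟪grad u x, grad v x⟫ + V x * (ι u x * ι v x)) μ := by
  simp_rw [inner_add_mul_eq_polarization]
  exact ((hQ _).sub (hQ _)).div_const 4

theorem integral_inner_add_mul_eq {Pp Pm : E →ₗ[ℝ] H}
    (hQ : ∀ w, Integrable (fun x => ‖grad w x‖ ^ 2 + V x * ι w x ^ 2) μ)
    (hform : ∀ w, ∫ x, (‖grad w x‖ ^ 2 + V x * ι w x ^ 2) ∂μ = ‖Pp w‖ ^ 2 - ‖Pm w‖ ^ 2)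
    (u v : E) :
    ∫ x, (⟪grad u x, grad v x⟫ + V x * (ι u x * ι v x)) ∂μ = ⟪Pp u, Pp v⟫ - ⟪Pm u, Pm v⟫ := by
  simp_rw [inner_add_mul_eq_polarization]
  rw [integral_div, integral_sub (hQ _) (hQ _), hform, hform]
  simp only [map_add, map_sub, norm_add_sq_real, norm_sub_sq_real]
  ring

theorem integrable_mul_mul (hV : ∀ w, Integrable (fun x => V x * ι w x ^ 2) μ) (u v : E) :
    Integrable (fun x => V x * (ι u x * ι v x)) μ := by
  refine (((hV (u + v)).sub (hV (u - v))).div_const 4).congr (ae_of_all _ fun x => ?_)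
  simp only [map_add, map_sub, Pi.add_apply, Pi.sub_apply]
  ring

variable {V₀ V₁ : X → ℝ} {Pp Pm : E →ₗ[ℝ] H}

theorem integrable_norm_sq_add_mul_sq {w : E} (hgrad : MemLp (fun x => ‖grad w x‖) 2 μ)
    (hV : Integrable (fun x => (V₀ x + V₁ x) * ι w x ^ 2) μ)
    (hV₁ : Integrable (fun x => V₁ x * ι w x ^ 2) μ) :
    Integrable (fun x => ‖grad w x‖ ^ 2 + V₀ x * ι w x ^ 2) μ :=
  (hgrad.integrable_sq.add (hV.sub hV₁)).congr
    (ae_of_all _ fun x => by simp only [Pi.add_apply, Pi.sub_apply]; ring)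

theorem integral_norm_sq_add_add_mul_sq_eq
    (hQ₀ : ∀ w, Integrable (fun x => ‖grad w x‖ ^ 2 + V₀ x * ι w x ^ 2) μ)
    (hV₁ : ∀ w, Integrable (fun x => V₁ x * ι w x ^ 2) μ)
    (hform : ∀ w, ∫ x, (‖grad w x‖ ^ 2 + V₀ x * ι w x ^ 2) ∂μ = ‖Pp w‖ ^ 2 - ‖Pm w‖ ^ 2)
    (w : E) :
    ∫ x, (‖grad w x‖ ^ 2 + (V₀ x + V₁ x) * ι w x ^ 2) ∂μ
      = ‖Pp w‖ ^ 2 - ‖Pm w‖ ^ 2 + ∫ x, V₁ x * ι w x ^ 2 ∂μ := by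
  rw [← hform w, ← integral_add (hQ₀ w) (hV₁ w)]
  exact integral_congr_ae (ae_of_all _ fun x => by ring)

theorem integral_inner_add_add_mul_eq
    (hQ₀ : ∀ w, Integrable (fun x => ‖grad w x‖ ^ 2 + V₀ x * ι w x ^ 2) μ)
    (hV₁ : ∀ w, Integrable (fun x => V₁ x * ι w x ^ 2) μ)
    (hform : ∀ w, ∫ x, (‖grad w x‖ ^ 2 + V₀ x * ι w x ^ 2) ∂μ = ‖Pp w‖ ^ 2 - ‖Pm w‖ ^ 2)
    (u v : E) :
    ∫ x, (⟪grad u x, grad v x⟫ + (V₀ x + V₁ x) * (ι u x * ι v x)) ∂μ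
      = ⟪Pp u, Pp v⟫ - ⟪Pm u, Pm v⟫ + ∫ x, V₁ x * (ι u x * ι v x) ∂μ := by
  simp only [add_mul, ← add_assoc]
  rw [integral_add (integrable_inner_add_mul hQ₀ u v) (integrable_mul_mul hV₁ u v),
    integral_inner_add_mul_eq hQ₀ hform]

end QuadraticForm

theorem energy_lower_bound_positive_part_general
    {E : Type*} [NormedAddCommGroup E] [InnerProductSpace ℝ E]
    {N : ℕ}
    -- `E = H¹(ℝᴺ)`, realized as a Hilbert space of functions on `ℝᴺ` via `ι`,
    -- with (weak) gradient `grad`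
    (ι : E →ₗ[ℝ] (EuclideanSpace ℝ (Fin N) → ℝ))
    (grad : E →ₗ[ℝ] (EuclideanSpace ℝ (Fin N) → EuclideanSpace ℝ (Fin N)))
    (hmemg : ∀ u : E, MemLp (fun x => ‖grad u x‖) 2 (volume : Measure (EuclideanSpace ℝ (Fin N))))
    -- the spectral decomposition of `E` into the negative and positive spectral
    -- subspaces of the Schrödinger operator, with the associated projections
    (Em Ep : Submodule ℝ E)
    (Pm Pp : E →L[ℝ] E)
    (hPm : ∀ u, Pm u ∈ Em) (hPp : ∀ u, Pp u ∈ Ep) (hPsum : ∀ u, Pm u + Pp u = u)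
    (hPmId : ∀ u ∈ Em, Pm u = u)
    (horth : ∀ v ∈ Em, ∀ w ∈ Ep, ⟪v, w⟫ = 0)
    -- (V0'): `V = V₀ + V₁`, `V₀` continuous and bounded, `V₁` continuous vanishing
    -- at infinity; the norm `‖·‖₀` of `E` is the form norm of `A₀ = -Δ + V₀`, whose
    -- quadratic form is positive on `Ep = E^{ℱ+}` and negative on `Em = E^{ℱ-}`
    (V₀ V₁ : EuclideanSpace ℝ (Fin N) → ℝ)
    (hform : ∀ u : E,
      (∫ x, (‖grad u x‖ ^ 2 + V₀ x * (ι u x) ^ 2)) = ‖Pp u‖ ^ 2 - ‖Pm u‖ ^ 2)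
    -- (F0) and (F1)
    (f : EuclideanSpace ℝ (Fin N) → ℝ → ℝ)
    (hfc : Continuous (Function.uncurry f))
    (hF1 : ∀ ε > 0, ∃ δ > 0, ∀ x t, |t| ≤ δ → |f x t| ≤ ε * |t|)
    -- (WN): `t ↦ f(x,t)/|t|` is nondecreasing on `(-∞,0)` and on `(0,∞)`
    (hWN : ∀ (x : EuclideanSpace ℝ (Fin N)) (s₁ s₂ : ℝ),
      s₁ ≤ s₂ → (s₂ < 0 ∨ 0 < s₁) → f x s₁ / |s₁| ≤ f x s₂ / |s₂|)
    -- the energy functional `Φ` and its derivative `Φ'`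
    (Φ : E → ℝ) (Φ' : E → E →L[ℝ] ℝ)
    (hΦ : ∀ u, Φ u = (1/2) * (∫ x, (‖grad u x‖ ^ 2 + (V₀ x + V₁ x) * (ι u x) ^ 2))
        - ∫ x, Fint f x (ι u x))
    (hΦ'eq : ∀ u v, Φ' u v =
      (∫ x, (⟪grad u x, grad v x⟫ + (V₀ x + V₁ x) * (ι u x * ι v x)))
        - ∫ x, f x (ι u x) * ι v x)
    (hintF : ∀ u : E, Integrable (fun x => Fint f x (ι u x)))
    (hintV : ∀ u : E, Integrable (fun x => (V₀ x + V₁ x) * (ι u x) ^ 2))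
    (hintf : ∀ u v : E, Integrable (fun x => f x (ι u x) * ι v x))
    (hintV₁ : ∀ u : E, Integrable (fun x => V₁ x * (ι u x) ^ 2))
 :
    ∀ (u : E) (t : ℝ), 0 ≤ t →
      t ^ 2 / 2 * ‖u‖ ^ 2 - (∫ x, Fint f x (t * ι (Pp u) x))
        + (1 - t ^ 2) / 2 * Φ' u u + t ^ 2 * Φ' u (Pm u)
        + t ^ 2 / 2 * (∫ x, V₁ x * ((ι (Pp u) x) ^ 2 - (ι (Pm u) x) ^ 2)) ≤ Φ u := by
  intro u t ht
  have hf : ∀ x, WeakNehari (f x) := fun x =>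
    .of_forall_abs_le (hfc.comp (.prodMk_right x))
      (fun ε hε => (hF1 ε hε).imp fun _ h => ⟨h.1, h.2 x⟩) (hWN x)
  have hm : Pm (Pm u) = Pm u := hPmId _ (hPm u)
  have hpm : Pp (Pm u) = 0 := by simpa [hm] using hPsum (Pm u)
  have hu : ∀ x, ι u x = ι (Pm u) x + ι (Pp u) x := fun x => by
    rw [← Pi.add_apply, ← map_add, hPsum]
  have hnorm : ‖u‖ ^ 2 = ‖Pm u‖ ^ 2 + ‖Pp u‖ ^ 2 := by
    simpa only [hPsum, sq] using
      norm_add_sq_eq_norm_sq_add_norm_sq_real (horth _ (hPm u) _ (hPp u))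
  have hQ₀ := fun w => integrable_norm_sq_add_mul_sq (hmemg w) (hintV w) (hintV₁ w)
  have hquad := integral_norm_sq_add_add_mul_sq_eq (Pp := Pp.toLinearMap)
    (Pm := Pm.toLinearMap) hQ₀ hintV₁ hform
  have hΦ'uu : Φ' u u = (∫ x, (‖grad u x‖ ^ 2 + (V₀ x + V₁ x) * ι u x ^ 2))
      - ∫ x, f x (ι u x) * ι u x := by
    simp only [hΦ'eq, real_inner_self_eq_norm_sq, ← sq]
  have hΦ'um : Φ' u (Pm u) = -‖Pm u‖ ^ 2 + (∫ x, V₁ x * (ι u x * ι (Pm u) x))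
      - ∫ x, f x (ι u x) * ι (Pm u) x := by
    rw [hΦ'eq, integral_inner_add_add_mul_eq (Pp := Pp.toLinearMap) (Pm := Pm.toLinearMap)
      hQ₀ hintV₁ hform]
    simp [hm, hpm]
  have hV₁ : ∫ x, V₁ x * (ι (Pp u) x ^ 2 - ι (Pm u) x ^ 2)
      = (∫ x, V₁ x * ι u x ^ 2) - 2 * ∫ x, V₁ x * (ι u x * ι (Pm u) x) := by
    rw [← integral_const_mul,
      ← integral_sub (hintV₁ u) ((integrable_mul_mul hintV₁ u _).const_mul 2)]
    exact integral_congr_ae (ae_of_all _ fun x => by simp only [hu x]; ring)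
  have hFtq : Integrable (fun x => Fint f x (t * ι (Pp u) x)) := by
    simpa using hintF (t • Pp u)
  have hF := integral_primitive_sub_le hf hu ht (hintF u) hFtq (hintf u u) (hintf u (Pm u))
  rw [hΦ u, hΦ'uu, hΦ'um, hquad, hnorm, hV₁]
  unfold Fint
  linear_combination hF

theorem energy_lower_bound_positive_part
    {E : Type*} [NormedAddCommGroup E] [InnerProductSpace ℝ E] [CompleteSpace E]
    {N : ℕ} (hN : 3 ≤ N)
    -- `E = H¹(ℝᴺ)`, realized as a Hilbert space of functions on `ℝᴺ` via `ι`,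
    -- with (weak) gradient `grad`
    (ι : E →ₗ[ℝ] (EuclideanSpace ℝ (Fin N) → ℝ)) (hι : Function.Injective ι)
    (grad : E →ₗ[ℝ] (EuclideanSpace ℝ (Fin N) → EuclideanSpace ℝ (Fin N)))
    (hmem2 : ∀ u : E, MemLp (ι u) 2 (volume : Measure (EuclideanSpace ℝ (Fin N))))
    (hmemg : ∀ u : E, MemLp (fun x => ‖grad u x‖) 2 (volume : Measure (EuclideanSpace ℝ (Fin N))))
    -- the spectral decomposition of `E` into the negative and positive spectral
    -- subspaces of the Schrödinger operator, with the associated projections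
    (Em Ep : Submodule ℝ E) (hEmc : IsClosed (Em : Set E)) (hEpc : IsClosed (Ep : Set E))
    (Pm Pp : E →L[ℝ] E)
    (hPm : ∀ u, Pm u ∈ Em) (hPp : ∀ u, Pp u ∈ Ep) (hPsum : ∀ u, Pm u + Pp u = u)
    (hPmId : ∀ u ∈ Em, Pm u = u) (hPpId : ∀ u ∈ Ep, Pp u = u)
    (horth : ∀ v ∈ Em, ∀ w ∈ Ep, ⟪v, w⟫ = 0)
    -- (V0'): `V = V₀ + V₁`, `V₀` continuous and bounded, `V₁` continuous vanishing
    -- at infinity; the norm `‖·‖₀` of `E` is the form norm of `A₀ = -Δ + V₀`, whose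
    -- quadratic form is positive on `Ep = E^{ℱ+}` and negative on `Em = E^{ℱ-}`
    (V₀ V₁ : EuclideanSpace ℝ (Fin N) → ℝ)
    (hV₀c : Continuous V₀) (hV₀b : ∃ M, ∀ x, |V₀ x| ≤ M) (hV₁c : Continuous V₁)
    (hV₁0 : Tendsto V₁ (cocompact (EuclideanSpace ℝ (Fin N))) (𝓝 0))
    (hform : ∀ u : E,
      (∫ x, (‖grad u x‖ ^ 2 + V₀ x * (ι u x) ^ 2)) = ‖Pp u‖ ^ 2 - ‖Pm u‖ ^ 2)
    -- (F0) and (F1)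
    (f : EuclideanSpace ℝ (Fin N) → ℝ → ℝ)
    (hfc : Continuous (Function.uncurry f))
    (p : ℝ) (hp1 : 2 < p) (hp2 : p < 2 * (N:ℝ) / ((N:ℝ) - 2))
    (hF0 : ∃ C₀ > 0, ∀ x t, |f x t| ≤ C₀ * (1 + |t| ^ (p - 1)))
    (hF1 : ∀ ε > 0, ∃ δ > 0, ∀ x t, |t| ≤ δ → |f x t| ≤ ε * |t|)
    -- (WN): `t ↦ f(x,t)/|t|` is nondecreasing on `(-∞,0)` and on `(0,∞)`
    (hWN : ∀ (x : EuclideanSpace ℝ (Fin N)) (s₁ s₂ : ℝ),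
      s₁ ≤ s₂ → (s₂ < 0 ∨ 0 < s₁) → f x s₁ / |s₁| ≤ f x s₂ / |s₂|)
    -- the energy functional `Φ` and its derivative `Φ'`
    (Φ : E → ℝ) (Φ' : E → E →L[ℝ] ℝ)
    (hΦ : ∀ u, Φ u = (1/2) * (∫ x, (‖grad u x‖ ^ 2 + (V₀ x + V₁ x) * (ι u x) ^ 2))
        - ∫ x, Fint f x (ι u x))
    (hΦ'd : ∀ u, HasFDerivAt Φ (Φ' u) u)
    (hΦ'eq : ∀ u v, Φ' u v =
      (∫ x, (⟪grad u x, grad v x⟫ + (V₀ x + V₁ x) * (ι u x * ι v x)))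
        - ∫ x, f x (ι u x) * ι v x)
    (hintF : ∀ u : E, Integrable (fun x => Fint f x (ι u x)))
    (hintV : ∀ u : E, Integrable (fun x => (V₀ x + V₁ x) * (ι u x) ^ 2))
    (hintf : ∀ u v : E, Integrable (fun x => f x (ι u x) * ι v x))
    (hintV₁ : ∀ u : E, Integrable (fun x => V₁ x * (ι u x) ^ 2))
 :
    ∀ (u : E) (t : ℝ), 0 ≤ t →
      t ^ 2 / 2 * ‖u‖ ^ 2 - (∫ x, Fint f x (t * ι (Pp u) x))
        + (1 - t ^ 2) / 2 * Φ' u u + t ^ 2 * Φ' u (Pm u)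
        + t ^ 2 / 2 * (∫ x, V₁ x * ((ι (Pp u) x) ^ 2 - (ι (Pm u) x) ^ 2)) ≤ Φ u :=
  energy_lower_bound_positive_part_general ι grad hmemg Em Ep Pm Pp hPm hPp hPsum hPmId horth V₀ V₁
    hform f hfc hF1 hWN Φ Φ' hΦ hΦ'eq hintF hintV hintf hintV₁
end
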